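/- arXiv:0808.1629 — 3 statements merged into one kernel-verified Lean document; each statement's English description precedes it below -/
import Mathlib

section
/- With the combinatorial setup below, assume c ≥ 3 and d ≥ 2, let p be a prime, and let π be the r-cycle given by π(i) = i + 1 for 1 ≤ i < r and π(r) = 1. Then the tuple γ := (c+1, c+2, …, r, c, 2) belongs to Δ₁ and κ(γ) = 2/p + 1/p² + ⋯ + 1/p^{d−1} (for d = 2 this means κ(γ) = 2/p). In particular, if p = 2, then κ(π) ≥ 1. -/
namespace PaperPurity

variable {r : ℕ}

/-- `J₊ = {(i,j) : j ≤ c < i}` (translated to 0-based indexing on `Fin r`). -/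
def Jp (c : ℕ) : Set (Fin r × Fin r) := {q | q.2.val < c ∧ c ≤ q.1.val}

/-- `J₀ = {(i,j) : i,j ≤ c or i,j > c}` (0-based). -/
def Jz (c : ℕ) : Set (Fin r × Fin r) :=
  {q | (q.1.val < c ∧ q.2.val < c) ∨ (c ≤ q.1.val ∧ c ≤ q.2.val)}

/-- `J₋ = {(i,j) : i ≤ c < j}` (0-based). -/
def Jm (c : ℕ) : Set (Fin r × Fin r) := {q | q.1.val < c ∧ c ≤ q.2.val}

/-- Apply `π^s` to both entries of a pair. -/
def iter (π : Equiv.Perm (Fin r)) (s : ℕ) (q : Fin r × Fin r) : Fin r × Fin r :=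
  ((π ^ s) q.1, (π ^ s) q.2)

/-- The π-order `ν(i,j)`: the smallest positive `ν` with `(π^ν i, π^ν j) ∈ J₊ ∪ J₋`.
On `J₀,₀` this `sInf` also computes the extended π-order `ν(i,j) - s`. -/
noncomputable def nu (π : Equiv.Perm (Fin r)) (c : ℕ) (q : Fin r × Fin r) : ℕ :=
  sInf {ν : ℕ | 0 < ν ∧ iter π ν q ∈ Jp c ∪ Jm c}

/-- `J₋,₁`. -/
def Jm1 (π : Equiv.Perm (Fin r)) (c : ℕ) : Set (Fin r × Fin r) :=
  {q | q ∈ Jm c ∧ iter π (nu π c q) q ∈ Jp c}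

/-- `J₊,₁`. -/
def Jp1 (π : Equiv.Perm (Fin r)) (c : ℕ) : Set (Fin r × Fin r) :=
  {q' | ∃ q ∈ Jm1 π c, q' = iter π (nu π c q) q}

/-- `J₊,₂ = J₊ \ J₊,₁`. -/
def Jp2 (π : Equiv.Perm (Fin r)) (c : ℕ) : Set (Fin r × Fin r) := Jp c \ Jp1 π c

/-- `J₀,₀`. -/
def Jz0 (π : Equiv.Perm (Fin r)) (c : ℕ) : Set (Fin r × Fin r) :=
  {q' | ∃ q ∈ Jm1 π c, ∃ s : ℕ, 1 ≤ s ∧ s ≤ nu π c q - 1 ∧ q' = iter π s q}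

/-- The π-level `η`. -/
noncomputable def eta (π : Equiv.Perm (Fin r)) (c : ℕ) (q' : Fin r × Fin r) : ℕ :=
  sInf {s : ℕ | ∃ q ∈ Jm1 π c, s ≤ nu π c q ∧ q' = iter π s q}

/-- Membership in `Γ` for the tuple `(γ 1, …, γ s)`. -/
def inGamma (π : Equiv.Perm (Fin r)) (c s : ℕ) (γ : ℕ → Fin r) : Prop :=
  2 ≤ s ∧ (∀ ℓ : ℕ, 1 ≤ ℓ → ℓ ≤ s - 2 → (γ ℓ, γ (ℓ + 1)) ∈ Jz0 π c) ∧
    (γ (s - 1), γ s) ∈ Jp2 π c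

/-- Membership in `Δ` for the tuple `(γ 1, …, γ s)`. -/
def inDelta (π : Equiv.Perm (Fin r)) (c s : ℕ) (γ : ℕ → Fin r) : Prop :=
  3 ≤ s ∧ inGamma π c (s - 1) γ ∧ (γ (s - 1), γ s) ∈ Jz0 π c

/-- `n_t(γ)`. -/
noncomputable def nCount (π : Equiv.Perm (Fin r)) (c s : ℕ) (γ : ℕ → Fin r) (t : ℕ) : ℕ :=
  Set.ncard {ℓ : ℕ | 1 ≤ ℓ ∧ ℓ ≤ s - 1 ∧ (γ ℓ, γ (ℓ + 1)) ∈ Jz0 π c ∧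
    nu π c (γ ℓ, γ (ℓ + 1)) = t}

/-- `κ(γ) = Σ_{t ≥ 1} n_t(γ) p^{-t} ∈ ℚ`. -/
noncomputable def kappa (p : ℕ) (π : Equiv.Perm (Fin r)) (c s : ℕ) (γ : ℕ → Fin r) : ℚ :=
  ∑ᶠ t : ℕ, if 1 ≤ t then (nCount π c s γ t : ℚ) / (p : ℚ) ^ t else 0

/-- Membership in `Γ₁`. -/
def inGamma1 (π : Equiv.Perm (Fin r)) (c s : ℕ) (γ : ℕ → Fin r) : Prop :=
  inGamma π c s γ ∧ (γ 1, γ s) ∈ Jp1 π c ∧ (γ 2, γ s) ∉ Jp1 π c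

/-- Membership in `Δ₁`. -/
def inDelta1 (π : Equiv.Perm (Fin r)) (c s : ℕ) (γ : ℕ → Fin r) : Prop :=
  inDelta π c s γ ∧ (γ 1, γ s) ∈ Jp1 π c ∧ (γ 2, γ s) ∉ Jp1 π c

/-- `κ(π) = max {κ(γ) : γ ∈ Γ₁ ∪ Δ₁}` (and `0` if `Γ₁ ∪ Δ₁ = ∅`); realized as a
supremum in `ℝ` of the (finite) set of values together with `0`. -/
noncomputable def kappaPerm (p : ℕ) (π : Equiv.Perm (Fin r)) (c : ℕ) : ℝ :=
  sSup (insert (0 : ℝ) {x : ℝ | ∃ (s : ℕ) (γ : ℕ → Fin r),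
    (inGamma1 π c s γ ∨ inDelta1 π c s γ) ∧ x = ((kappa p π c s γ : ℚ) : ℝ)})

/-- The `k`-span of the matrix units `E_{i,j}`, `(i,j) ∈ S`. -/
def spanUnits (k : Type*) [Field k] {r : ℕ} (S : Set (Fin r × Fin r)) :
    Submodule k (Matrix (Fin r) (Fin r) k) :=
  Submodule.span k ((fun q : Fin r × Fin r => Matrix.single q.1 q.2 (1 : k)) '' S)


lemma nat_sInf_eq {S : Set ℕ} {n : ℕ} (h1 : n ∈ S) (h2 : ∀ m < n, m ∉ S) : sInf S = n :=
  le_antisymm (Nat.sInf_le h1) (le_of_not_gt fun h => h2 _ h (Nat.sInf_mem ⟨n, h1⟩))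

section Cycle
variable {c d : ℕ} {π : Equiv.Perm (Fin (c + d))}

def IsCyc (π : Equiv.Perm (Fin (c + d))) : Prop :=
  ∀ i : Fin (c + d), (π i).val = (i.val + 1) % (c + d)

lemma powv (hπ : IsCyc π) : ∀ (s : ℕ) (i : Fin (c + d)),
    ((π ^ s) i).val = (i.val + s) % (c + d) := by
  intro s
  induction s with
  | zero => intro i; simp [Nat.mod_eq_of_lt i.isLt]
  | succ n ih =>
    intro i
    rw [pow_succ, Equiv.Perm.mul_apply, ih, hπ, Nat.mod_add_mod]
    congr 1; omega

lemma mem_iff_vals {q : Fin (c+d) × Fin (c+d)} (hπ : IsCyc π) (ν : ℕ) :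
    iter π ν q ∈ Jp c ∪ Jm c ↔
      (((q.2.val + ν) % (c+d) < c ∧ c ≤ (q.1.val + ν) % (c+d)) ∨
       ((q.1.val + ν) % (c+d) < c ∧ c ≤ (q.2.val + ν) % (c+d))) := by
  simp [iter, Jp, Jm, Set.mem_setOf_eq, powv hπ]

/-- Case `a = c-1`: `ν = r - b`, lands in `J₊`. -/
lemma nuA (hπ : IsCyc π) {q : Fin (c+d) × Fin (c+d)} (hc : 0 < c)
    (h1 : q.1.val = c - 1) (h2 : c ≤ q.2.val) :
    nu π c q = (c + d) - q.2.val ∧ q ∈ Jm1 π c := by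
  have hb : q.2.val < c + d := q.2.isLt
  have key : iter π ((c+d) - q.2.val) q ∈ Jp c := by
    show ((π ^ _) q.2).val < c ∧ c ≤ ((π ^ _) q.1).val
    rw [powv hπ, powv hπ]
    have e2 : (q.2.val + ((c+d) - q.2.val)) % (c+d) = 0 := by
      have h : q.2.val + ((c+d) - q.2.val) = c + d := by omega
      rw [h, Nat.mod_self]
    have e1 : (q.1.val + ((c+d) - q.2.val)) % (c+d) = q.1.val + ((c+d) - q.2.val) :=
      Nat.mod_eq_of_lt (by omega)
    rw [e1, e2]; omega
  have hnu : nu π c q = (c + d) - q.2.val := by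
    apply nat_sInf_eq
    · exact ⟨by omega, Or.inl key⟩
    · rintro m hm ⟨hm0, hmem⟩
      rw [mem_iff_vals hπ] at hmem
      rw [Nat.mod_eq_of_lt (by omega : q.1.val + m < c + d),
          Nat.mod_eq_of_lt (by omega : q.2.val + m < c + d)] at hmem
      omega
  exact ⟨hnu, ⟨⟨by omega, h2⟩, by rw [hnu]; exact key⟩⟩

/-- Case `b = r-1`, `a ≤ c-2`: `ν = c - a`, lands in `J₊`. -/
lemma nuB (hπ : IsCyc π) {q : Fin (c+d) × Fin (c+d)} (hd : 0 < d)
    (h1 : q.1.val + 2 ≤ c) (h2 : q.2.val = c + d - 1) :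
    nu π c q = c - q.1.val ∧ q ∈ Jm1 π c := by
  have key : iter π (c - q.1.val) q ∈ Jp c := by
    show ((π ^ _) q.2).val < c ∧ c ≤ ((π ^ _) q.1).val
    rw [powv hπ, powv hπ]
    have e1 : (q.1.val + (c - q.1.val)) % (c+d) = c := by
      have h : q.1.val + (c - q.1.val) = c := by omega
      rw [h, Nat.mod_eq_of_lt (by omega)]
    have e2 : (q.2.val + (c - q.1.val)) % (c+d) = c - q.1.val - 1 := by
      rw [Nat.mod_eq_sub_mod (by omega), Nat.mod_eq_of_lt (by omega)]
      omega
    rw [e1, e2]; omega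
  have hnu : nu π c q = c - q.1.val := by
    apply nat_sInf_eq
    · exact ⟨by omega, Or.inl key⟩
    · rintro m hm ⟨hm0, hmem⟩
      rw [mem_iff_vals hπ] at hmem
      rw [Nat.mod_eq_of_lt (by omega : q.1.val + m < c + d),
          Nat.mod_eq_sub_mod (by omega : c + d ≤ q.2.val + m),
          Nat.mod_eq_of_lt (by omega : q.2.val + m - (c+d) < c + d)] at hmem
      omega
  exact ⟨hnu, ⟨⟨by omega, by omega⟩, by rw [hnu]; exact key⟩⟩

/-- Case `a ≤ c-2`, `b ≤ r-2`: `ν = 1`, lands in `J₋`, so not in `J₋,₁`. -/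
lemma nuC (hπ : IsCyc π) {q : Fin (c+d) × Fin (c+d)}
    (h1 : q.1.val + 2 ≤ c) (h2 : c ≤ q.2.val) (h3 : q.2.val + 1 < c + d) :
    nu π c q = 1 ∧ q ∉ Jm1 π c := by
  have hnu : nu π c q = 1 := by
    apply nat_sInf_eq
    · refine ⟨Nat.one_pos, Or.inr ?_⟩
      show ((π ^ _) q.1).val < c ∧ c ≤ ((π ^ _) q.2).val
      rw [powv hπ, powv hπ, Nat.mod_eq_of_lt (by omega), Nat.mod_eq_of_lt (by omega)]
      omega
    · rintro m hm ⟨hm0, -⟩; omega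
  refine ⟨hnu, fun ⟨_, hJp⟩ => ?_⟩
  rw [hnu] at hJp
  obtain ⟨hlt, hge⟩ := hJp
  simp only [iter, powv hπ] at hlt hge
  rw [Nat.mod_eq_of_lt (by omega)] at hlt
  omega

lemma mem_Jm1_cases (hπ : IsCyc π) {q : Fin (c+d) × Fin (c+d)} (h : q ∈ Jm1 π c) :
    q.1.val = c - 1 ∨ (q.1.val + 2 ≤ c ∧ q.2.val = c + d - 1) := by
  by_contra hcon
  push_neg at hcon
  have ha := h.1.1
  have hb := h.1.2
  exact (nuC hπ (by omega) hb (by have := q.2.isLt; omega)).2 h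

lemma Jp1_char (hπ : IsCyc π) (hc : 0 < c) (hd : 0 < d) (q' : Fin (c+d) × Fin (c+d)) :
    q' ∈ Jp1 π c ↔ (c ≤ q'.1.val ∧ q'.2.val = 0) ∨ (q'.1.val = c ∧ q'.2.val < c) := by
  constructor
  · rintro ⟨q, hq, heq⟩
    rcases mem_Jm1_cases hπ hq with h1 | ⟨h1, h2⟩
    · have hb := hq.1.2
      have hblt := q.2.isLt
      obtain ⟨hnu, -⟩ := nuA hπ hc h1 hb
      left
      rw [heq, hnu]
      constructor
      · show c ≤ ((π ^ _) q.1).val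
        rw [powv hπ, Nat.mod_eq_of_lt (by omega)]; omega
      · show ((π ^ _) q.2).val = 0
        rw [powv hπ]
        have h : q.2.val + (c + d - q.2.val) = c + d := by omega
        rw [h, Nat.mod_self]
    · have ha := hq.1.1
      obtain ⟨hnu, -⟩ := nuB hπ hd h1 h2
      right
      rw [heq, hnu]
      constructor
      · show ((π ^ _) q.1).val = c
        rw [powv hπ]
        have h : q.1.val + (c - q.1.val) = c := by omega
        rw [h, Nat.mod_eq_of_lt (by omega)]
      · show ((π ^ _) q.2).val < c
        rw [powv hπ, Nat.mod_eq_sub_mod (by omega), Nat.mod_eq_of_lt (by omega)]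
        omega
  · rintro (⟨h1, h2⟩ | ⟨h1, h2⟩)
    · have hlt := q'.1.isLt
      set b : ℕ := 2 * c + d - 1 - q'.1.val with hbdef
      refine ⟨(⟨c - 1, by omega⟩, ⟨b, by omega⟩), ?_, ?_⟩
      · exact (nuA hπ hc rfl (by simp only; omega)).2
      · have hnu := (nuA hπ hc (q := (⟨c - 1, by omega⟩, ⟨b, by omega⟩)) rfl
          (by simp only; omega)).1
        rw [hnu]
        refine Prod.ext (Fin.ext ?_) (Fin.ext ?_)
        · show q'.1.val = ((π ^ _) (⟨c - 1, by omega⟩ : Fin (c+d))).val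
          rw [powv hπ]
          simp only
          rw [Nat.mod_eq_of_lt (by omega)]
          omega
        · show q'.2.val = ((π ^ _) (⟨b, by omega⟩ : Fin (c+d))).val
          rw [powv hπ]
          simp only
          have h : b + (c + d - b) = c + d := by omega
          rw [h, Nat.mod_self, h2]
    · rcases Nat.eq_zero_or_pos q'.2.val with h0 | h0
      · -- reduce to the first construction
        have hlt := q'.1.isLt
        set b : ℕ := 2 * c + d - 1 - q'.1.val with hbdef
        refine ⟨(⟨c - 1, by omega⟩, ⟨b, by omega⟩), ?_, ?_⟩
        · exact (nuA hπ hc rfl (by simp only; omega)).2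
        · have hnu := (nuA hπ hc (q := (⟨c - 1, by omega⟩, ⟨b, by omega⟩)) rfl
            (by simp only; omega)).1
          rw [hnu]
          refine Prod.ext (Fin.ext ?_) (Fin.ext ?_)
          · show q'.1.val = ((π ^ _) (⟨c - 1, by omega⟩ : Fin (c+d))).val
            rw [powv hπ]
            simp only
            rw [Nat.mod_eq_of_lt (by omega)]
            omega
          · show q'.2.val = ((π ^ _) (⟨b, by omega⟩ : Fin (c+d))).val
            rw [powv hπ]
            simp only
            have h : b + (c + d - b) = c + d := by omega
            rw [h, Nat.mod_self, h0]
      · set a : ℕ := c - 1 - q'.2.val with hadef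
        refine ⟨(⟨a, by omega⟩, ⟨c + d - 1, by omega⟩), ?_, ?_⟩
        · exact (nuB hπ hd (by simp only; omega) rfl).2
        · have hnu := (nuB hπ hd (q := (⟨a, by omega⟩, ⟨c + d - 1, by omega⟩))
            (by simp only; omega) rfl).1
          rw [hnu]
          refine Prod.ext (Fin.ext ?_) (Fin.ext ?_)
          · show q'.1.val = ((π ^ _) (⟨a, by omega⟩ : Fin (c+d))).val
            rw [powv hπ]
            simp only
            have h : a + (c - a) = c := by omega
            rw [h, Nat.mod_eq_of_lt (by omega), h1]
          · show q'.2.val = ((π ^ _) (⟨c + d - 1, by omega⟩ : Fin (c+d))).val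
            rw [powv hπ]
            simp only
            rw [Nat.mod_eq_sub_mod (by omega), Nat.mod_eq_of_lt (by omega)]
            omega

lemma Jz0_char (hπ : IsCyc π) (hc : 0 < c) (hd : 0 < d) (q' : Fin (c+d) × Fin (c+d)) :
    q' ∈ Jz0 π c ↔ (c ≤ q'.1.val ∧ q'.1.val < q'.2.val) ∨
      (q'.2.val < q'.1.val ∧ q'.1.val < c) := by
  constructor
  · rintro ⟨q, hq, s, hs1, hs2, heq⟩
    rcases mem_Jm1_cases hπ hq with h1 | ⟨h1, h2⟩
    · have hb := hq.1.2
      have hblt := q.2.isLt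
      obtain ⟨hnu, -⟩ := nuA hπ hc h1 hb
      rw [hnu] at hs2
      left
      rw [heq]
      have e1 : ((π ^ s) q.1).val = q.1.val + s := by
        rw [powv hπ, Nat.mod_eq_of_lt (by omega)]
      have e2 : ((π ^ s) q.2).val = q.2.val + s := by
        rw [powv hπ, Nat.mod_eq_of_lt (by omega)]
      show c ≤ ((π ^ s) q.1).val ∧ ((π ^ s) q.1).val < ((π ^ s) q.2).val
      rw [e1, e2]; omega
    · obtain ⟨hnu, -⟩ := nuB hπ hd h1 h2
      rw [hnu] at hs2
      right
      rw [heq]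
      have e1 : ((π ^ s) q.1).val = q.1.val + s := by
        rw [powv hπ, Nat.mod_eq_of_lt (by omega)]
      have e2 : ((π ^ s) q.2).val = s - 1 := by
        rw [powv hπ, Nat.mod_eq_sub_mod (by omega), Nat.mod_eq_of_lt (by omega)]
        omega
      show ((π ^ s) q.2).val < ((π ^ s) q.1).val ∧ ((π ^ s) q.1).val < c
      rw [e1, e2]; omega
  · rintro (⟨hx, hxy⟩ | ⟨hyx, hxc⟩)
    · have hylt := q'.2.isLt
      set b : ℕ := c - 1 + (q'.2.val - q'.1.val) with hbdef
      have hq1lt := q'.1.isLt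
      refine ⟨(⟨c - 1, by omega⟩, ⟨b, by omega⟩), ?_, q'.1.val - (c - 1), by omega, ?_, ?_⟩
      · exact (nuA hπ hc rfl (by simp only; omega)).2
      · have hnu := (nuA hπ hc (q := (⟨c - 1, by omega⟩, ⟨b, by omega⟩)) rfl
          (by simp only; omega)).1
        rw [hnu]; simp only; omega
      · refine Prod.ext (Fin.ext ?_) (Fin.ext ?_)
        · show q'.1.val = ((π ^ _) (⟨c - 1, by omega⟩ : Fin (c+d))).val
          rw [powv hπ]; simp only
          rw [Nat.mod_eq_of_lt (by omega)]; omega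
        · show q'.2.val = ((π ^ _) (⟨b, by omega⟩ : Fin (c+d))).val
          rw [powv hπ]; simp only
          rw [Nat.mod_eq_of_lt (by omega)]; omega
    · set a : ℕ := q'.1.val - q'.2.val - 1 with hadef
      refine ⟨(⟨a, by omega⟩, ⟨c + d - 1, by omega⟩), ?_, q'.2.val + 1, by omega, ?_, ?_⟩
      · exact (nuB hπ hd (by simp only; omega) rfl).2
      · have hnu := (nuB hπ hd (q := (⟨a, by omega⟩, ⟨c + d - 1, by omega⟩))
          (by simp only; omega) rfl).1
        rw [hnu]; simp only; omega
      · refine Prod.ext (Fin.ext ?_) (Fin.ext ?_)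
        · show q'.1.val = ((π ^ _) (⟨a, by omega⟩ : Fin (c+d))).val
          rw [powv hπ]; simp only
          rw [Nat.mod_eq_of_lt (by omega)]; omega
        · show q'.2.val = ((π ^ _) (⟨c + d - 1, by omega⟩ : Fin (c+d))).val
          rw [powv hπ]; simp only
          rw [Nat.mod_eq_sub_mod (by omega), Nat.mod_eq_of_lt (by omega)]; omega

lemma nu_upper (hπ : IsCyc π) (hc : 0 < c) {q' : Fin (c+d) × Fin (c+d)}
    (hx : c ≤ q'.1.val) (hxy : q'.1.val < q'.2.val) :
    nu π c q' = (c + d) - q'.2.val := by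
  have hylt := q'.2.isLt
  apply nat_sInf_eq
  · refine ⟨by omega, Or.inl ?_⟩
    show ((π ^ _) q'.2).val < c ∧ c ≤ ((π ^ _) q'.1).val
    rw [powv hπ, powv hπ]
    have e2 : (q'.2.val + (c + d - q'.2.val)) = c + d := by omega
    rw [e2, Nat.mod_self, Nat.mod_eq_of_lt (by omega)]
    omega
  · rintro m hm ⟨hm0, hmem⟩
    rw [mem_iff_vals hπ] at hmem
    rw [Nat.mod_eq_of_lt (by omega : q'.1.val + m < c + d),
        Nat.mod_eq_of_lt (by omega : q'.2.val + m < c + d)] at hmem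
    omega

lemma nu_lower (hπ : IsCyc π) (hd : 0 < d) {q' : Fin (c+d) × Fin (c+d)}
    (hyx : q'.2.val < q'.1.val) (hxc : q'.1.val < c) :
    nu π c q' = c - q'.1.val := by
  apply nat_sInf_eq
  · refine ⟨by omega, Or.inl ?_⟩
    show ((π ^ _) q'.2).val < c ∧ c ≤ ((π ^ _) q'.1).val
    rw [powv hπ, powv hπ]
    have e1 : q'.1.val + (c - q'.1.val) = c := by omega
    rw [e1, Nat.mod_eq_of_lt (by omega), Nat.mod_eq_of_lt (by omega)]
    omega
  · rintro m hm ⟨hm0, hmem⟩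
    rw [mem_iff_vals hπ] at hmem
    rw [Nat.mod_eq_of_lt (by omega : q'.1.val + m < c + d),
        Nat.mod_eq_of_lt (by omega : q'.2.val + m < c + d)] at hmem
    omega

lemma nu_Jz0_le (hπ : IsCyc π) (hc : 0 < c) (hd : 0 < d) {q' : Fin (c+d) × Fin (c+d)}
    (h : q' ∈ Jz0 π c) : nu π c q' ≤ c + d := by
  rcases (Jz0_char hπ hc hd q').1 h with ⟨hx, hxy⟩ | ⟨hyx, hxc⟩
  · rw [nu_upper hπ hc hx hxy]; omega
  · rw [nu_lower hπ hd hyx hxc]; omega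

end Cycle

section Main
variable {c d : ℕ} {π : Equiv.Perm (Fin (c + d))} {γ : ℕ → Fin (c + d)}

lemma pair_facts (hc : 3 ≤ c) (hd : 2 ≤ d) (hπ : IsCyc π)
    (hγ1 : ∀ ℓ : ℕ, 1 ≤ ℓ → ℓ ≤ d → (γ ℓ).val = c + ℓ - 1)
    (hγ2 : (γ (d + 1)).val = c - 1) (hγ3 : (γ (d + 2)).val = 1) :
    (∀ ℓ, 1 ≤ ℓ → ℓ + 1 ≤ d →
      (γ ℓ, γ (ℓ + 1)) ∈ Jz0 π c ∧ nu π c (γ ℓ, γ (ℓ + 1)) = d - ℓ) ∧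
    ((γ d, γ (d + 1)) ∉ Jz0 π c) ∧
    ((γ (d + 1), γ (d + 2)) ∈ Jz0 π c ∧ nu π c (γ (d + 1), γ (d + 2)) = 1) := by
  have hcpos : 0 < c := by omega
  have hdpos : 0 < d := by omega
  refine ⟨fun ℓ h1 h2 => ?_, ?_, ?_, ?_⟩
  · have v1 : (γ ℓ).val = c + ℓ - 1 := hγ1 ℓ h1 (by omega)
    have v2 : (γ (ℓ + 1)).val = c + ℓ := by
      have := hγ1 (ℓ + 1) (by omega) (by omega); omega
    constructor
    · rw [Jz0_char hπ hcpos hdpos]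
      left
      show c ≤ (γ ℓ).val ∧ (γ ℓ).val < (γ (ℓ + 1)).val
      omega
    · rw [nu_upper hπ hcpos (q' := (γ ℓ, γ (ℓ + 1))) (by show c ≤ (γ ℓ).val; omega)
        (by show (γ ℓ).val < (γ (ℓ+1)).val; omega)]
      show c + d - (γ (ℓ + 1)).val = d - ℓ
      omega
  · rw [Jz0_char hπ hcpos hdpos]
    have v1 : (γ d).val = c + d - 1 := hγ1 d (by omega) le_rfl
    rintro (⟨h, h'⟩ | ⟨h, h'⟩)
    · have a1 : c ≤ (γ d).val := h
      have a2 : (γ d).val < (γ (d + 1)).val := h'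
      omega
    · have a1 : (γ (d + 1)).val < (γ d).val := h
      have a2 : (γ d).val < c := h'
      omega
  · rw [Jz0_char hπ hcpos hdpos]
    right
    show (γ (d + 2)).val < (γ (d + 1)).val ∧ (γ (d + 1)).val < c
    omega
  · rw [nu_lower hπ hdpos (q' := (γ (d+1), γ (d+2)))
      (by show (γ (d+2)).val < (γ (d+1)).val; omega)
      (by show (γ (d+1)).val < c; omega)]
    show c - (γ (d + 1)).val = 1
    omega

lemma nCount_one (hc : 3 ≤ c) (hd : 2 ≤ d) (hπ : IsCyc π)
    (hγ1 : ∀ ℓ : ℕ, 1 ≤ ℓ → ℓ ≤ d → (γ ℓ).val = c + ℓ - 1)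
    (hγ2 : (γ (d + 1)).val = c - 1) (hγ3 : (γ (d + 2)).val = 1) :
    nCount π c (d + 2) γ 1 = 2 := by
  obtain ⟨f1, f2, f3, f4⟩ := pair_facts hc hd hπ hγ1 hγ2 hγ3
  have hset : {ℓ : ℕ | 1 ≤ ℓ ∧ ℓ ≤ d + 2 - 1 ∧ (γ ℓ, γ (ℓ + 1)) ∈ Jz0 π c ∧
      nu π c (γ ℓ, γ (ℓ + 1)) = 1} = {d - 1, d + 1} := by
    ext ℓ
    simp only [Set.mem_setOf_eq, Set.mem_insert_iff, Set.mem_singleton_iff]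
    constructor
    · rintro ⟨h1, h2, hJ, hnu⟩
      by_cases hl : ℓ + 1 ≤ d
      · have := (f1 ℓ h1 hl).2; omega
      · by_cases hl2 : ℓ = d
        · subst hl2; exact absurd hJ f2
        · omega
    · rintro (rfl | rfl)
      · obtain ⟨hJ, hnu⟩ := f1 (d - 1) (by omega) (by omega)
        exact ⟨by omega, by omega, hJ, by omega⟩
      · exact ⟨by omega, by omega, f3, f4⟩
  rw [nCount, hset, Set.ncard_pair (by omega)]

lemma nCount_mid (hc : 3 ≤ c) (hd : 2 ≤ d) (hπ : IsCyc π)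
    (hγ1 : ∀ ℓ : ℕ, 1 ≤ ℓ → ℓ ≤ d → (γ ℓ).val = c + ℓ - 1)
    (hγ2 : (γ (d + 1)).val = c - 1) (hγ3 : (γ (d + 2)).val = 1)
    {t : ℕ} (ht1 : 2 ≤ t) (ht2 : t ≤ d - 1) :
    nCount π c (d + 2) γ t = 1 := by
  obtain ⟨f1, f2, f3, f4⟩ := pair_facts hc hd hπ hγ1 hγ2 hγ3
  have hset : {ℓ : ℕ | 1 ≤ ℓ ∧ ℓ ≤ d + 2 - 1 ∧ (γ ℓ, γ (ℓ + 1)) ∈ Jz0 π c ∧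
      nu π c (γ ℓ, γ (ℓ + 1)) = t} = {d - t} := by
    ext ℓ
    simp only [Set.mem_setOf_eq, Set.mem_singleton_iff]
    constructor
    · rintro ⟨h1, h2, hJ, hnu⟩
      by_cases hl : ℓ + 1 ≤ d
      · have := (f1 ℓ h1 hl).2; omega
      · by_cases hl2 : ℓ = d
        · subst hl2; exact absurd hJ f2
        · have hval : ℓ = d + 1 := by omega
          subst hval
          have hf4 : nu π c (γ (d + 1), γ (d + 1 + 1)) = 1 := f4
          omega
    · rintro rfl
      obtain ⟨hJ, hnu⟩ := f1 (d - t) (by omega) (by omega)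
      exact ⟨by omega, by omega, hJ, by omega⟩
  rw [nCount, hset, Set.ncard_singleton]

lemma nCount_large (hc : 3 ≤ c) (hd : 2 ≤ d) (hπ : IsCyc π)
    (hγ1 : ∀ ℓ : ℕ, 1 ≤ ℓ → ℓ ≤ d → (γ ℓ).val = c + ℓ - 1)
    (hγ2 : (γ (d + 1)).val = c - 1) (hγ3 : (γ (d + 2)).val = 1)
    {t : ℕ} (ht : d ≤ t) :
    nCount π c (d + 2) γ t = 0 := by
  obtain ⟨f1, f2, f3, f4⟩ := pair_facts hc hd hπ hγ1 hγ2 hγ3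
  have hempty : {ℓ : ℕ | 1 ≤ ℓ ∧ ℓ ≤ d + 2 - 1 ∧ (γ ℓ, γ (ℓ + 1)) ∈ Jz0 π c ∧
      nu π c (γ ℓ, γ (ℓ + 1)) = t} = ∅ := by
    apply Set.eq_empty_iff_forall_notMem.2
    rintro ℓ ⟨h1, h2, hJ, hnu⟩
    by_cases hl : ℓ + 1 ≤ d
    · have := (f1 ℓ h1 hl).2; omega
    · by_cases hl2 : ℓ = d
      · subst hl2; exact f2 hJ
      · have hval : ℓ = d + 1 := by omega
        subst hval
        have hf4 : nu π c (γ (d + 1), γ (d + 1 + 1)) = 1 := f4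
        omega
  rw [nCount, hempty, Set.ncard_empty]

lemma nCount_le (π : Equiv.Perm (Fin (c+d))) (cc s : ℕ) (γ' : ℕ → Fin (c+d)) (t : ℕ) :
    nCount π cc s γ' t ≤ s - 1 := by
  have hsub : {ℓ : ℕ | 1 ≤ ℓ ∧ ℓ ≤ s - 1 ∧ (γ' ℓ, γ' (ℓ + 1)) ∈ Jz0 π cc ∧
      nu π cc (γ' ℓ, γ' (ℓ + 1)) = t} ⊆ Set.Icc 1 (s - 1) :=
    fun ℓ hℓ => ⟨hℓ.1, hℓ.2.1⟩
  calc nCount π cc s γ' t ≤ (Set.Icc 1 (s-1)).ncard :=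
        Set.ncard_le_ncard hsub (Set.finite_Icc _ _)
    _ ≤ s - 1 := by rw [← Finset.coe_Icc, Set.ncard_coe_finset, Nat.card_Icc]; omega

lemma nCount_zero_of_big (hπ : IsCyc π) (hc : 0 < c) (hd : 0 < d)
    (s : ℕ) (γ' : ℕ → Fin (c+d)) {t : ℕ} (ht : c + d < t) :
    nCount π c s γ' t = 0 := by
  have hempty : {ℓ : ℕ | 1 ≤ ℓ ∧ ℓ ≤ s - 1 ∧ (γ' ℓ, γ' (ℓ + 1)) ∈ Jz0 π c ∧
      nu π c (γ' ℓ, γ' (ℓ + 1)) = t} = ∅ := by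
    apply Set.eq_empty_iff_forall_notMem.2
    rintro ℓ ⟨h1, h2, hJ, hnu⟩
    have := nu_Jz0_le hπ hc hd hJ
    omega
  rw [nCount, hempty, Set.ncard_empty]

lemma s_bound (hπ : IsCyc π) (hc : 0 < c) (hd : 0 < d) {s : ℕ} {γ' : ℕ → Fin (c+d)}
    (h : inGamma π c s γ') : s ≤ c + d + 1 := by
  obtain ⟨hs2, hchain, -⟩ := h
  set h' : ℕ → ℕ := fun ℓ => if (γ' ℓ).val < c then c - 1 - (γ' ℓ).val else (γ' ℓ).val with hh
  have step : ∀ k, k ≤ s - 2 → k ≤ h' (1 + k) := by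
    intro k
    induction k with
    | zero => intro _; exact Nat.zero_le _
    | succ n ih =>
      intro hk
      have hn := ih (by omega)
      have hpair := hchain (1 + n) (by omega) (by omega)
      have hnext : h' (1 + n) < h' (1 + n + 1) := by
        rcases (Jz0_char hπ hc hd _).1 hpair with ⟨hx, hxy⟩ | ⟨hyx, hxc⟩
        · have hx' : c ≤ (γ' (1 + n)).val := hx
          have hxy' : (γ' (1 + n)).val < (γ' (1 + n + 1)).val := hxy
          simp only [hh]
          rw [if_neg (by omega), if_neg (by omega)]
          exact hxy'
        · have hyx' : (γ' (1 + n + 1)).val < (γ' (1 + n)).val := hyx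
          have hxc' : (γ' (1 + n)).val < c := hxc
          simp only [hh]
          rw [if_pos (by omega), if_pos (by omega)]
          omega
      have : h' (1 + (n + 1)) = h' (1 + n + 1) := by rw [Nat.add_assoc]
      omega
  have hfin := step (s - 2) le_rfl
  have hub : h' (1 + (s - 2)) ≤ c + d - 1 := by
    simp only [hh]
    split
    · omega
    · have := (γ' (1 + (s - 2))).isLt; omega
  omega

lemma kappa_le (hπ : IsCyc π) (hc : 0 < c) (hd : 0 < d) {p : ℕ} (hp : 1 ≤ p)
    (s : ℕ) (γ' : ℕ → Fin (c+d)) :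
    kappa p π c s γ' ≤ ((s - 1 : ℕ) : ℚ) * ((c + d : ℕ) : ℚ) := by
  have hsupp : Function.support
      (fun t : ℕ => if 1 ≤ t then (nCount π c s γ' t : ℚ) / (p : ℚ) ^ t else 0)
      ⊆ ↑(Finset.Icc 1 (c + d)) := by
    intro t ht
    simp only [Function.mem_support] at ht
    simp only [Finset.coe_Icc, Set.mem_Icc]
    by_contra hcon
    push_neg at hcon
    rcases Nat.lt_or_ge t 1 with h0 | h1
    · exact ht (if_neg (by omega))
    · have hbig : c + d < t := hcon h1
      exact ht (by rw [if_pos h1, nCount_zero_of_big hπ hc hd s γ' hbig]; simp)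
  rw [kappa, finsum_eq_finset_sum_of_support_subset _ hsupp]
  calc ∑ t ∈ Finset.Icc 1 (c+d), (if 1 ≤ t then (nCount π c s γ' t : ℚ) / (p:ℚ) ^ t else 0)
      ≤ ∑ _t ∈ Finset.Icc 1 (c+d), ((s - 1 : ℕ) : ℚ) := by
        apply Finset.sum_le_sum
        intro t _
        split
        · calc (nCount π c s γ' t : ℚ) / (p:ℚ) ^ t ≤ (nCount π c s γ' t : ℚ) := by
                apply div_le_self (by positivity)
                exact one_le_pow₀ (by exact_mod_cast hp)
            _ ≤ ((s - 1 : ℕ) : ℚ) := by exact_mod_cast nCount_le π c s γ' t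
        · positivity
    _ ≤ ((s - 1 : ℕ) : ℚ) * ((c + d : ℕ) : ℚ) := by
        rw [Finset.sum_const, Nat.card_Icc]
        simp only [nsmul_eq_mul]
        rw [mul_comm]
        apply mul_le_mul_of_nonneg_left _ (by positivity)
        exact_mod_cast Nat.le_refl _ |>.trans (by omega)

lemma kappa_val (hc : 3 ≤ c) (hd : 2 ≤ d) (hπ : IsCyc π) (p : ℕ)
    (hγ1 : ∀ ℓ : ℕ, 1 ≤ ℓ → ℓ ≤ d → (γ ℓ).val = c + ℓ - 1)
    (hγ2 : (γ (d + 1)).val = c - 1) (hγ3 : (γ (d + 2)).val = 1) :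
    kappa p π c (d + 2) γ = 2 / (p : ℚ) + ∑ t ∈ Finset.Icc 2 (d - 1), 1 / (p : ℚ) ^ t := by
  have hsupp : Function.support
      (fun t : ℕ => if 1 ≤ t then (nCount π c (d+2) γ t : ℚ) / (p : ℚ) ^ t else 0)
      ⊆ ↑(Finset.Icc 1 (d - 1)) := by
    intro t ht
    simp only [Function.mem_support] at ht
    simp only [Finset.coe_Icc, Set.mem_Icc]
    by_contra hcon
    push_neg at hcon
    rcases Nat.lt_or_ge t 1 with h0 | h1
    · exact ht (if_neg (by omega))
    · have hbig : d ≤ t := by omega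
      exact ht (by rw [if_pos h1, nCount_large hc hd hπ hγ1 hγ2 hγ3 hbig]; simp)
  rw [kappa, finsum_eq_finset_sum_of_support_subset _ hsupp]
  have hins : Finset.Icc 1 (d - 1) = insert 1 (Finset.Icc 2 (d - 1)) := by
    ext x; simp only [Finset.mem_Icc, Finset.mem_insert]; omega
  rw [hins, Finset.sum_insert (by simp only [Finset.mem_Icc]; omega)]
  congr 1
  · rw [if_pos le_rfl, nCount_one hc hd hπ hγ1 hγ2 hγ3, pow_one]
    norm_num
  · apply Finset.sum_congr rfl
    intro t ht
    simp only [Finset.mem_Icc] at ht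
    rw [if_pos (by omega), nCount_mid hc hd hπ hγ1 hγ2 hγ3 ht.1 ht.2]
    norm_num

lemma main_delta1 (hc : 3 ≤ c) (hd : 2 ≤ d) (hπ : IsCyc π)
    (hγ1 : ∀ ℓ : ℕ, 1 ≤ ℓ → ℓ ≤ d → (γ ℓ).val = c + ℓ - 1)
    (hγ2 : (γ (d + 1)).val = c - 1) (hγ3 : (γ (d + 2)).val = 1) :
    inDelta1 π c (d + 2) γ := by
  have hcpos : 0 < c := by omega
  have hdpos : 0 < d := by omega
  obtain ⟨f1, f2, f3, f4⟩ := pair_facts hc hd hπ hγ1 hγ2 hγ3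
  have hv1 : (γ 1).val = c := by have := hγ1 1 le_rfl (by omega); omega
  have hv2 : (γ 2).val = c + 1 := by have := hγ1 2 (by omega) hd; omega
  have hvd : (γ d).val = c + d - 1 := hγ1 d (by omega) le_rfl
  refine ⟨⟨by omega, ?_, ?_⟩, ?_, ?_⟩
  · -- inGamma π c (d + 2 - 1) γ
    rw [show d + 2 - 1 = d + 1 from rfl]
    refine ⟨by omega, fun ℓ h1 h2 => ?_, ?_⟩
    · exact (f1 ℓ h1 (by omega)).1
    · rw [show d + 1 - 1 = d from rfl]
      constructor
      · show (γ (d+1)).val < c ∧ c ≤ (γ d).val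
        omega
      · rw [Jp1_char hπ hcpos hdpos]
        rintro (⟨h, h'⟩ | ⟨h, h'⟩)
        · have a1 : c ≤ (γ d).val := h
          have a2 : (γ (d + 1)).val = 0 := h'
          omega
        · have a1 : (γ d).val = c := h
          have a2 : (γ (d + 1)).val < c := h'
          omega
  · -- (γ (d + 2 - 1), γ (d + 2)) ∈ Jz0
    rw [show d + 2 - 1 = d + 1 from rfl]
    exact f3
  · -- (γ 1, γ (d + 2)) ∈ Jp1
    rw [Jp1_char hπ hcpos hdpos]
    right
    show (γ 1).val = c ∧ (γ (d+2)).val < c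
    omega
  · -- (γ 2, γ (d + 2)) ∉ Jp1
    rw [Jp1_char hπ hcpos hdpos]
    rintro (⟨h, h'⟩ | ⟨h, h'⟩)
    · have a1 : c ≤ (γ 2).val := h
      have a2 : (γ (d + 2)).val = 0 := h'
      omega
    · have a1 : (γ 2).val = c := h
      have a2 : (γ (d + 2)).val < c := h'
      omega

end Main

theorem statement_16 (c d : ℕ) (hc : 3 ≤ c) (hd : 2 ≤ d) (p : ℕ) (hp : p.Prime)
    (π : Equiv.Perm (Fin (c + d)))
    (hπ : ∀ i : Fin (c + d), (π i).val = (i.val + 1) % (c + d))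
    (γ : ℕ → Fin (c + d))
    (hγ1 : ∀ ℓ : ℕ, 1 ≤ ℓ → ℓ ≤ d → (γ ℓ).val = c + ℓ - 1)
    (hγ2 : (γ (d + 1)).val = c - 1)
    (hγ3 : (γ (d + 2)).val = 1) :
    inDelta1 π c (d + 2) γ ∧
    kappa p π c (d + 2) γ = 2 / (p : ℚ) + ∑ t ∈ Finset.Icc 2 (d - 1), 1 / (p : ℚ) ^ t ∧
    (p = 2 → 1 ≤ kappaPerm p π c) := by
  have hcyc : IsCyc π := hπ
  have hdelta := main_delta1 hc hd hcyc hγ1 hγ2 hγ3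
  have hkval := kappa_val hc hd hcyc p hγ1 hγ2 hγ3
  refine ⟨hdelta, hkval, ?_⟩
  rintro rfl
  have hk1 : (1 : ℚ) ≤ kappa 2 π c (d + 2) γ := by
    rw [hkval]
    have hsum : (0 : ℚ) ≤ ∑ t ∈ Finset.Icc 2 (d - 1), 1 / ((2 : ℕ) : ℚ) ^ t :=
      Finset.sum_nonneg fun t _ => by positivity
    norm_num at hsum ⊢
    linarith
  unfold kappaPerm
  refine le_trans (show (1 : ℝ) ≤ ((kappa 2 π c (d + 2) γ : ℚ) : ℝ) from by
    exact_mod_cast hk1) (le_csSup ?_ ?_)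
  · refine ⟨(((c + d + 1) * (c + d) : ℕ) : ℝ), ?_⟩
    rintro x hx
    rcases Set.mem_insert_iff.1 hx with rfl | ⟨s, γ', hg, rfl⟩
    · positivity
    · have hs1 : s - 1 ≤ c + d + 1 := by
        rcases hg with hg | hg
        · have := s_bound hcyc (by omega) (by omega) hg.1
          omega
        · exact s_bound hcyc (by omega) (by omega) hg.1.2.1
      have h1 : kappa 2 π c s γ' ≤ (((c + d + 1) * (c + d) : ℕ) : ℚ) := by
        calc kappa 2 π c s γ' ≤ ((s - 1 : ℕ) : ℚ) * ((c + d : ℕ) : ℚ) :=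
              kappa_le hcyc (by omega) (by omega) (by norm_num) s γ'
          _ ≤ ((c + d + 1 : ℕ) : ℚ) * ((c + d : ℕ) : ℚ) := by
              apply mul_le_mul_of_nonneg_right _ (by positivity)
              exact_mod_cast hs1
          _ = (((c + d + 1) * (c + d) : ℕ) : ℚ) := by push_cast; ring
      exact_mod_cast h1
  · exact Set.mem_insert_iff.2 (Or.inr ⟨d + 2, γ, Or.inr hdelta, rfl⟩)

end PaperPurity
end

section
/- Let k be a field, let k[[x₁,x₂,x₃,x₄]] be the formal power series ring in four variables over k, and let R := k[[x₁,x₂,x₃,x₄]]/(x₁x₄ − x₂x₃). Then every unit of the localization R[1/x₁] is of the form u·x₁^t, where u is the image of a unit of R and t is an integer (here x₁ denotes the image of x₁ in R[1/x₁], which is invertible). -/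
open MvPowerSeries Finset

abbrev M4 := Fin 4 →₀ ℕ

noncomputable def mk4 (a b c d : ℕ) : M4 := Finsupp.equivFunOnFinite.symm ![a,b,c,d]

@[simp] lemma mk4_apply0 (a b c d : ℕ) : mk4 a b c d 0 = a := rfl
@[simp] lemma mk4_apply1 (a b c d : ℕ) : mk4 a b c d 1 = b := rfl
@[simp] lemma mk4_apply2 (a b c d : ℕ) : mk4 a b c d 2 = c := rfl
@[simp] lemma mk4_apply3 (a b c d : ℕ) : mk4 a b c d 3 = d := rfl

lemma m4_ext {e e' : M4} (h0 : e 0 = e' 0) (h1 : e 1 = e' 1) (h2 : e 2 = e' 2)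
    (h3 : e 3 = e' 3) : e = e' := by
  ext i; fin_cases i <;> assumption

lemma eq_mk4 (e : M4) : e = mk4 (e 0) (e 1) (e 2) (e 3) := m4_ext rfl rfl rfl rfl

lemma m4_le_iff {e e' : M4} : e ≤ e' ↔ e 0 ≤ e' 0 ∧ e 1 ≤ e' 1 ∧ e 2 ≤ e' 2 ∧ e 3 ≤ e' 3 := by
  rw [Finsupp.le_def]
  constructor
  · intro h; exact ⟨h 0, h 1, h 2, h 3⟩
  · rintro ⟨a, b, c, d⟩ i; fin_cases i <;> assumption

@[simp] lemma m4_add_apply (e e' : M4) (i : Fin 4) : (e + e') i = e i + e' i := rfl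
@[simp] lemma m4_sub_apply (e e' : M4) (i : Fin 4) : (e - e') i = e i - e' i :=
  Finsupp.tsub_apply e e' i

noncomputable def img (e : M4) : M4 := mk4 (e 0 + e 1) (e 2 + e 3) (e 0 + e 2) (e 1 + e 3)

lemma img_add (e e' : M4) : img (e + e') = img e + img e' := by
  apply m4_ext <;> simp [img] <;> ring

lemma img_zero : img 0 = 0 := by apply m4_ext <;> simp [img]

noncomputable def bnd (E : M4) : M4 := mk4 (E 0) (E 0) (E 1) (E 1)

noncomputable def Fib (E : M4) : Finset M4 := (Finset.Iic (bnd E)).filter (fun e => img e = E)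

lemma mem_Fib {E e : M4} : e ∈ Fib E ↔ img e = E := by
  rw [Fib, Finset.mem_filter, Finset.mem_Iic]
  refine ⟨fun h => h.2, fun h => ⟨?_, h⟩⟩
  have h0 := congrArg (fun x : M4 => x 0) h
  have h1 := congrArg (fun x : M4 => x 1) h
  simp only [img] at h0 h1
  rw [m4_le_iff]
  simp only [bnd, mk4_apply0, mk4_apply1, mk4_apply2, mk4_apply3] at *
  omega

section Phi
variable {k : Type*} [CommRing k]

noncomputable def phiFun (f : MvPowerSeries (Fin 4) k) : MvPowerSeries (Fin 4) k :=
  fun E => ∑ e ∈ Fib E, f e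

lemma coeffE (f : MvPowerSeries (Fin 4) k) (E : M4) :
    MvPowerSeries.coeff E f = f E := rfl

noncomputable def Pairs (E : M4) : Finset (M4 × M4) :=
  ((Finset.Iic (bnd E)) ×ˢ (Finset.Iic (bnd E))).filter (fun p => img (p.1 + p.2) = E)

lemma mem_Pairs {E : M4} {p : M4 × M4} : p ∈ Pairs E ↔ img (p.1 + p.2) = E := by
  rw [Pairs, Finset.mem_filter, Finset.mem_product, Finset.mem_Iic, Finset.mem_Iic]
  refine ⟨fun h => h.2, fun h => ⟨⟨?_, ?_⟩, h⟩⟩ <;>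
  · have h' : p.1 + p.2 ∈ Fib E := mem_Fib.mpr h
    rw [Fib, Finset.mem_filter, Finset.mem_Iic] at h'
    have := h'.1
    rw [m4_le_iff] at this ⊢
    simp only [m4_add_apply] at this
    omega

lemma sum_pairs_left (f g : MvPowerSeries (Fin 4) k) (E : M4) :
    ∑ e ∈ Fib E, ∑ p ∈ antidiagonal e, f p.1 * g p.2 = ∑ p ∈ Pairs E, f p.1 * g p.2 := by
  classical
  have maps : ∀ p ∈ Pairs E, p.1 + p.2 ∈ Fib E :=
    fun p hp => mem_Fib.mpr (mem_Pairs.mp hp)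
  have key := Finset.sum_fiberwise_of_maps_to maps (fun p : M4 × M4 => f p.1 * g p.2)
  rw [← key]
  apply Finset.sum_congr rfl
  intro e he
  apply Finset.sum_congr
  · ext p
    rw [Finset.HasAntidiagonal.mem_antidiagonal, Finset.mem_filter, mem_Pairs]
    constructor
    · intro h; exact ⟨by rw [h]; exact mem_Fib.mp he, h⟩
    · exact fun h => h.2
  · exact fun _ _ => rfl

lemma sum_pairs_right (f g : MvPowerSeries (Fin 4) k) (E : M4) :
    ∑ P ∈ antidiagonal E, (∑ e ∈ Fib P.1, f e) * (∑ e ∈ Fib P.2, g e)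
      = ∑ p ∈ Pairs E, f p.1 * g p.2 := by
  classical
  have maps : ∀ p ∈ Pairs E, (img p.1, img p.2) ∈ antidiagonal E := fun p hp => by
    rw [Finset.HasAntidiagonal.mem_antidiagonal, ← img_add]; exact mem_Pairs.mp hp
  have key := Finset.sum_fiberwise_of_maps_to maps (fun p : M4 × M4 => f p.1 * g p.2)
  rw [← key]
  apply Finset.sum_congr rfl
  intro P hP
  rw [Finset.HasAntidiagonal.mem_antidiagonal] at hP
  refine ((Finset.sum_mul_sum _ _ _ _).trans (Finset.sum_product' _ _ _).symm).trans ?_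
  apply Finset.sum_congr
  · ext p
    rw [Finset.mem_product, Finset.mem_filter, mem_Pairs, mem_Fib, mem_Fib]
    constructor
    · rintro ⟨h1, h2⟩
      refine ⟨?_, ?_⟩
      · rw [img_add, h1, h2, hP]
      · rw [Prod.ext_iff]; exact ⟨h1, h2⟩
    · rintro ⟨_, h⟩
      rw [Prod.ext_iff] at h; exact h
  · exact fun _ _ => rfl

lemma phiFun_mul (f g : MvPowerSeries (Fin 4) k) :
    phiFun (f * g) = phiFun f * phiFun g := by
  classical
  ext E
  rw [coeffE, MvPowerSeries.coeff_mul]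
  show ∑ e ∈ Fib E, (f * g) e = _
  calc ∑ e ∈ Fib E, (f * g) e
      = ∑ e ∈ Fib E, ∑ p ∈ antidiagonal e, f p.1 * g p.2 := by
        apply Finset.sum_congr rfl
        intro e _
        exact MvPowerSeries.coeff_mul e f g
    _ = ∑ p ∈ Pairs E, f p.1 * g p.2 := sum_pairs_left f g E
    _ = ∑ P ∈ antidiagonal E, (∑ e ∈ Fib P.1, f e) * (∑ e ∈ Fib P.2, g e) :=
        (sum_pairs_right f g E).symm

lemma phiFun_monomial (e : M4) (c : k) :
    phiFun (MvPowerSeries.monomial e c) = MvPowerSeries.monomial (img e) c := by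
  classical
  ext E
  rw [coeffE, MvPowerSeries.coeff_monomial]
  show ∑ e' ∈ Fib E, (MvPowerSeries.monomial e c : MvPowerSeries (Fin 4) k) e' = _
  have step : ∀ e' ∈ Fib E, (MvPowerSeries.monomial e c : MvPowerSeries (Fin 4) k) e'
      = if e' = e then c else 0 := fun e' _ => MvPowerSeries.coeff_monomial e' e c
  rw [Finset.sum_congr rfl step, Finset.sum_ite_eq' (Fib E) e (fun _ => c)]
  by_cases h : img e = E
  · rw [if_pos (mem_Fib.mpr h), if_pos h.symm]
  · rw [if_neg (fun hh => h (mem_Fib.mp hh)), if_neg (fun hh => h hh.symm)]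

noncomputable def phi : MvPowerSeries (Fin 4) k →+* MvPowerSeries (Fin 4) k where
  toFun := phiFun
  map_one' := by
    have h1 : (1 : MvPowerSeries (Fin 4) k) = MvPowerSeries.monomial 0 1 :=
      (MvPowerSeries.monomial_zero_one).symm
    rw [h1, phiFun_monomial, img_zero, ← h1]
  map_mul' := phiFun_mul
  map_zero' := by
    ext E
    exact Finset.sum_eq_zero (fun _ _ => rfl)
  map_add' := by
    intro f g
    ext E
    exact Finset.sum_add_distrib
end Phi

def Bal (E : M4) : Prop := E 0 + E 1 = E 2 + E 3

instance : DecidablePred Bal := fun E => Nat.decEq _ _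

lemma bal_img (e : M4) : Bal (img e) := by simp [Bal, img]; ring

lemma phiFun_bal {k : Type*} [CommRing k] (f : MvPowerSeries (Fin 4) k) {E : M4}
    (h : ¬ Bal E) : phiFun f E = 0 := by
  apply Finset.sum_eq_zero
  intro e he
  exact absurd (mem_Fib.mp he ▸ bal_img e) h

noncomputable def TT (E : M4) : Finset ℕ :=
  (Finset.range (E 0 ⊓ E 2 + 1)).filter (fun t => E 2 ≤ E 1 + t ∧ Bal E)

noncomputable def cand (E : M4) (t : ℕ) : M4 := mk4 t (E 0 - t) (E 2 - t) (E 1 - (E 2 - t))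

lemma mem_TT {E : M4} {t : ℕ} : t ∈ TT E ↔ t ≤ E 0 ⊓ E 2 ∧ E 2 ≤ E 1 + t ∧ Bal E := by
  rw [TT, Finset.mem_filter, Finset.mem_range]
  constructor
  · rintro ⟨h1, h2, h3⟩; exact ⟨by omega, h2, h3⟩
  · rintro ⟨h1, h2, h3⟩; exact ⟨by omega, h2, h3⟩

lemma img_cand {E : M4} {t : ℕ} (h : t ∈ TT E) : img (cand E t) = E := by
  rw [mem_TT] at h
  obtain ⟨h1, h2, h3⟩ := h
  rw [Bal] at h3
  apply m4_ext <;> simp [img, cand] <;> omega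

lemma Fib_eq_image (E : M4) : Fib E = (TT E).image (cand E) := by
  ext e
  rw [Finset.mem_image, mem_Fib]
  constructor
  · intro h
    refine ⟨e 0, ?_, ?_⟩
    · rw [mem_TT]
      have h0 := congrArg (fun x : M4 => x 0) h
      have h1 := congrArg (fun x : M4 => x 1) h
      have h2 := congrArg (fun x : M4 => x 2) h
      have h3 := congrArg (fun x : M4 => x 3) h
      simp only [img] at h0 h1 h2 h3
      simp only [mk4_apply0, mk4_apply1, mk4_apply2, mk4_apply3] at h0 h1 h2 h3
      constructor
      · omega
      constructor
      · omega
      · rw [Bal]; omega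
    · have h0 := congrArg (fun x : M4 => x 0) h
      have h1 := congrArg (fun x : M4 => x 1) h
      have h2 := congrArg (fun x : M4 => x 2) h
      have h3 := congrArg (fun x : M4 => x 3) h
      simp only [img] at h0 h1 h2 h3
      simp only [mk4_apply0, mk4_apply1, mk4_apply2, mk4_apply3] at h0 h1 h2 h3
      apply m4_ext <;> simp [cand] <;> omega
  · rintro ⟨t, ht, rfl⟩
    exact img_cand ht

lemma sum_Fib_eq {k : Type*} [CommRing k] (E : M4) (f : M4 → k) :
    ∑ e ∈ Fib E, f e = ∑ t ∈ TT E, f (cand E t) := by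
  rw [Fib_eq_image]
  apply Finset.sum_image
  intro t1 h1 t2 h2 hc
  have := congrArg (fun x : M4 => x 0) hc
  simpa [cand] using this

/-- the explicit section of `phi` on balanced series -/
noncomputable def sig {k : Type*} [CommRing k] (d : MvPowerSeries (Fin 4) k) :
    MvPowerSeries (Fin 4) k :=
  fun e => if e 1 = 0 ∨ e 2 = 0 then d (img e) else 0

lemma phi_sig {k : Type*} [CommRing k] (d : MvPowerSeries (Fin 4) k)
    (hd : ∀ E, ¬ Bal E → d E = 0) : phiFun (sig d) = d := by
  classical
  ext E
  rw [coeffE]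
  show ∑ e ∈ Fib E, sig d e = d E
  refine (sum_Fib_eq (k := k) E (fun e => sig d e)).trans ?_
  have step : ∀ t ∈ TT E, sig d (cand E t) = if t = E 0 ⊓ E 2 then d E else 0 := by
    intro t ht
    have htt := mem_TT.mp ht
    rw [sig]
    by_cases hc : t = E 0 ⊓ E 2
    · rw [if_pos hc, if_pos, img_cand ht]
      simp only [cand, mk4_apply1, mk4_apply2]
      omega
    · rw [if_neg hc, if_neg]
      simp only [cand, mk4_apply1, mk4_apply2]
      omega
  rw [Finset.sum_congr rfl step, Finset.sum_ite_eq' (TT E) (E 0 ⊓ E 2) (fun _ => d E)]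
  by_cases hb : Bal E
  · rw [if_pos]
    rw [mem_TT, Bal] at *
    omega
  · rw [if_neg, hd E hb]
    rw [mem_TT]
    tauto

noncomputable def m03 : M4 := mk4 1 0 0 1
noncomputable def m12 : M4 := mk4 0 1 1 0

section Red
variable {k : Type*} [CommRing k]

lemma X0X3 : (MvPowerSeries.X 0 * MvPowerSeries.X 3 : MvPowerSeries (Fin 4) k)
    = MvPowerSeries.monomial m03 1 := by
  rw [MvPowerSeries.X_def, MvPowerSeries.X_def, MvPowerSeries.monomial_mul_monomial, one_mul]
  have h : ((fun₀ | (0 : Fin 4) => 1) + fun₀ | (3 : Fin 4) => 1 : M4) = m03 := by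
    apply m4_ext <;> simp [m03, Finsupp.single_apply]
  rw [h]

lemma X1X2 : (MvPowerSeries.X 1 * MvPowerSeries.X 2 : MvPowerSeries (Fin 4) k)
    = MvPowerSeries.monomial m12 1 := by
  rw [MvPowerSeries.X_def, MvPowerSeries.X_def, MvPowerSeries.monomial_mul_monomial, one_mul]
  have h : ((fun₀ | (1 : Fin 4) => 1) + fun₀ | (2 : Fin 4) => 1 : M4) = m12 := by
    apply m4_ext <;> simp [m12, Finsupp.single_apply]
  rw [h]

lemma coeff_q_mul (g : MvPowerSeries (Fin 4) k) (e : M4) :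
    MvPowerSeries.coeff e
      ((MvPowerSeries.X 0 * MvPowerSeries.X 3 - MvPowerSeries.X 1 * MvPowerSeries.X 2) * g)
    = (if 1 ≤ e 0 ∧ 1 ≤ e 3 then g (e - m03) else 0)
      - (if 1 ≤ e 1 ∧ 1 ≤ e 2 then g (e - m12) else 0) := by
  rw [sub_mul, map_sub, X0X3, X1X2,
    MvPowerSeries.coeff_monomial_mul, MvPowerSeries.coeff_monomial_mul]
  have h1 : m03 ≤ e ↔ (1 ≤ e 0 ∧ 1 ≤ e 3) := by
    rw [m4_le_iff]; simp [m03]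
  have h2 : m12 ≤ e ↔ (1 ≤ e 1 ∧ 1 ≤ e 2) := by
    rw [m4_le_iff]; simp [m12]
  congr 1
  · by_cases h : 1 ≤ e 0 ∧ 1 ≤ e 3
    · rw [if_pos (h1.mpr h), if_pos h, one_mul]; rfl
    · rw [if_neg (fun hh => h (h1.mp hh)), if_neg h]
  · by_cases h : 1 ≤ e 1 ∧ 1 ≤ e 2
    · rw [if_pos (h2.mpr h), if_pos h, one_mul]; rfl
    · rw [if_neg (fun hh => h (h2.mp hh)), if_neg h]

noncomputable def gg (f : MvPowerSeries (Fin 4) k) : MvPowerSeries (Fin 4) k :=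
  fun e => ∑ i ∈ Finset.range (e 0 ⊓ e 3 + 1),
    f (mk4 (e 0 - i) (e 1 + i + 1) (e 2 + i + 1) (e 3 - i))

/-- key reduction identity: every `f` is congruent to `sig (phi f)` modulo the quadric. -/
lemma reduction (f : MvPowerSeries (Fin 4) k) :
    sig (phiFun f) = f +
      (MvPowerSeries.X 0 * MvPowerSeries.X 3 - MvPowerSeries.X 1 * MvPowerSeries.X 2) * gg f := by
  classical
  ext e
  rw [coeffE, map_add, coeffE, coeff_q_mul]
  set s2 : ℕ → k := fun i => f (mk4 (e 0 - i) (e 1 + i) (e 2 + i) (e 3 - i)) with hs2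
  have hfe : f e = s2 0 := by
    rw [hs2]
    exact congrArg f (by apply m4_ext <;> simp)
  have hA : (1 ≤ e 0 ∧ 1 ≤ e 3) → gg f (e - m03) = ∑ i ∈ Finset.range (e 0 ⊓ e 3), s2 (i + 1) := by
    intro h
    rw [gg]
    have hc : (e - m03) 0 = e 0 - 1 := by simp [m03]
    have hc1 : (e - m03) 1 = e 1 := by simp [m03]
    have hc2 : (e - m03) 2 = e 2 := by simp [m03]
    have hc3 : (e - m03) 3 = e 3 - 1 := by simp [m03]
    rw [hc, hc1, hc2, hc3]
    have hr : (e 0 - 1) ⊓ (e 3 - 1) + 1 = e 0 ⊓ e 3 := by omega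
    rw [hr]
    apply Finset.sum_congr rfl
    intro i _
    apply congrArg f
    apply m4_ext <;> simp <;> omega
  have hB : (1 ≤ e 1 ∧ 1 ≤ e 2) → gg f (e - m12) = ∑ i ∈ Finset.range (e 0 ⊓ e 3 + 1), s2 i := by
    intro h
    rw [gg]
    have hc : (e - m12) 0 = e 0 := by simp [m12]
    have hc1 : (e - m12) 1 = e 1 - 1 := by simp [m12]
    have hc2 : (e - m12) 2 = e 2 - 1 := by simp [m12]
    have hc3 : (e - m12) 3 = e 3 := by simp [m12]
    rw [hc, hc1, hc2, hc3]
    apply Finset.sum_congr rfl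
    intro i _
    apply congrArg f
    apply m4_ext <;> simp <;> omega
  have hC : (e 1 = 0 ∨ e 2 = 0) →
      sig (phiFun f) e = ∑ i ∈ Finset.range (e 0 ⊓ e 3 + 1), s2 i := by
    intro h
    rw [sig, if_pos h]
    show ∑ e' ∈ Fib (img e), f e' = _
    refine (sum_Fib_eq (k := k) (img e) (fun e' => f e')).trans ?_
    apply Finset.sum_nbij' (fun t => e 0 - t) (fun i => e 0 - i)
    · intro t ht
      rw [mem_TT] at ht
      simp only [img] at ht
      simp only [mk4_apply0, mk4_apply1, mk4_apply2, mk4_apply3] at ht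
      rw [Finset.mem_range]
      rcases h with h | h <;> omega
    · intro i hi
      rw [Finset.mem_range] at hi
      rw [mem_TT]
      refine ⟨?_, ?_, bal_img e⟩ <;> simp only [img] <;>
        simp only [mk4_apply0, mk4_apply1, mk4_apply2, mk4_apply3] <;> omega
    · intro t ht
      rw [mem_TT] at ht
      simp only [img] at ht
      simp only [mk4_apply0, mk4_apply1, mk4_apply2, mk4_apply3] at ht
      rcases h with h | h <;> omega
    · intro i hi
      rw [Finset.mem_range] at hi
      omega
    · intro t ht
      rw [mem_TT] at ht
      simp only [img] at ht
      simp only [mk4_apply0, mk4_apply1, mk4_apply2, mk4_apply3] at ht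
      apply congrArg f
      apply m4_ext <;> simp [cand, img] <;> rcases h with h | h <;> omega
  have hsplit : ∑ i ∈ Finset.range (e 0 ⊓ e 3 + 1), s2 i
      = ∑ i ∈ Finset.range (e 0 ⊓ e 3), s2 (i + 1) + s2 0 := Finset.sum_range_succ' s2 _
  by_cases h12 : 1 ≤ e 1 ∧ 1 ≤ e 2
  · have hC0 : sig (phiFun f) e = 0 := by
      rw [sig, if_neg]; omega
    rw [hC0, if_pos h12, hB h12, hfe]
    by_cases h03 : 1 ≤ e 0 ∧ 1 ≤ e 3
    · rw [if_pos h03, hA h03, hsplit]; ring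
    · rw [if_neg h03]
      have hm : e 0 ⊓ e 3 = 0 := by omega
      rw [hsplit, hm]
      simp
  · have h' : e 1 = 0 ∨ e 2 = 0 := by omega
    rw [hC h', if_neg h12, hfe]
    by_cases h03 : 1 ≤ e 0 ∧ 1 ≤ e 3
    · rw [if_pos h03, hA h03, hsplit]; ring
    · rw [if_neg h03]
      have hm : e 0 ⊓ e 3 = 0 := by omega
      rw [hsplit, hm]
      simp
end Red

section Prime
variable {k : Type*} [Field k]

noncomputable def restr (s : Fin 4) (f : MvPowerSeries (Fin 4) k) :
    MvPowerSeries (Fin 4) k := fun e => if e s = 0 then f e else 0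

lemma restr_apply (s : Fin 4) (f : MvPowerSeries (Fin 4) k) (e : M4) :
    restr s f e = if e s = 0 then f e else 0 := rfl

lemma X_ne_zero' (s : Fin 4) : (MvPowerSeries.X s : MvPowerSeries (Fin 4) k) ≠ 0 := by
  intro h0
  have := congrArg (MvPowerSeries.coeff (Finsupp.single s 1)) h0
  rw [MvPowerSeries.coeff_X, if_pos rfl, map_zero] at this
  exact one_ne_zero this

lemma X_prime (s : Fin 4) : Prime (MvPowerSeries.X s : MvPowerSeries (Fin 4) k) := by
  classical
  refine ⟨X_ne_zero' s, ?_, ?_⟩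
  · rw [MvPowerSeries.isUnit_iff_constantCoeff, MvPowerSeries.constantCoeff_X]
    exact not_isUnit_zero
  · intro f g h
    by_contra hc
    push_neg at hc
    obtain ⟨hf, hg⟩ := hc
    rw [MvPowerSeries.X_dvd_iff] at hf hg
    push_neg at hf hg
    obtain ⟨e1, he1, hf1⟩ := hf
    obtain ⟨e2, he2, hg1⟩ := hg
    have r1 : restr s f ≠ 0 := by
      intro h0
      apply hf1
      have := congrFun h0 e1
      rw [restr_apply, if_pos he1] at this
      exact this
    have r2 : restr s g ≠ 0 := by
      intro h0
      apply hg1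
      have := congrFun h0 e2
      rw [restr_apply, if_pos he2] at this
      exact this
    have r3 : restr s f * restr s g ≠ 0 := mul_ne_zero r1 r2
    have hex : ∃ E, MvPowerSeries.coeff E (restr s f * restr s g) ≠ 0 := by
      by_contra hall
      push_neg at hall
      exact r3 (MvPowerSeries.ext hall)
    obtain ⟨E, hE⟩ := hex
    have hEs : E s = 0 := by
      by_contra hEs
      apply hE
      rw [MvPowerSeries.coeff_mul]
      apply Finset.sum_eq_zero
      rintro ⟨p1, p2⟩ hp
      rw [Finset.HasAntidiagonal.mem_antidiagonal] at hp
      have hps : p1 s + p2 s = E s := by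
        have := congrArg (fun x : Fin 4 →₀ ℕ => x s) hp
        simpa using this
      by_cases h1 : p1 s = 0
      · have h2 : p2 s ≠ 0 := by omega
        have hz : MvPowerSeries.coeff p2 (restr s g) = 0 := by
          rw [coeffE, restr_apply, if_neg h2]
        rw [hz, mul_zero]
      · have hz : MvPowerSeries.coeff p1 (restr s f) = 0 := by
          rw [coeffE, restr_apply, if_neg h1]
        rw [hz, zero_mul]
    have r4 : MvPowerSeries.coeff E (f * g) = MvPowerSeries.coeff E (restr s f * restr s g) := by
      rw [MvPowerSeries.coeff_mul, MvPowerSeries.coeff_mul]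
      apply Finset.sum_congr rfl
      rintro ⟨p1, p2⟩ hp
      rw [Finset.HasAntidiagonal.mem_antidiagonal] at hp
      have hps : p1 s + p2 s = E s := by
        have := congrArg (fun x : Fin 4 →₀ ℕ => x s) hp
        simpa using this
      have h1 : p1 s = 0 := by omega
      have h2 : p2 s = 0 := by omega
      have e1' : MvPowerSeries.coeff p1 (restr s f) = MvPowerSeries.coeff p1 f := by
        rw [coeffE, restr_apply, if_pos h1]; rfl
      have e2' : MvPowerSeries.coeff p2 (restr s g) = MvPowerSeries.coeff p2 g := by
        rw [coeffE, restr_apply, if_pos h2]; rfl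
      rw [e1', e2']
    rw [MvPowerSeries.X_dvd_iff] at h
    exact hE (r4 ▸ h E hEs)

end Prime

/-- generic factorization of divisors of `p^N * q^M` in a domain -/
lemma factor_aux {D : Type*} [CommRing D] [NoZeroDivisors D] {p q : D}
    (hp : Prime p) (hq : Prime q) :
    ∀ n N M r s, N + M ≤ n → r * s = p ^ N * q ^ M →
      ∃ (U : Dˣ) (i j : ℕ), r = (U : D) * p ^ i * q ^ j := by
  intro n
  induction n with
  | zero =>
    intro N M r s hle heq
    have hN : N = 0 := by omega
    have hM : M = 0 := by omega
    subst hN; subst hM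
    simp only [pow_zero, mul_one] at heq
    refine ⟨(IsUnit.of_mul_eq_one s heq).unit, 0, 0, by simp⟩
  | succ n IH =>
    intro N M r s hle heq
    match N, M with
    | 0, 0 =>
      simp only [pow_zero, mul_one] at heq
      refine ⟨(IsUnit.of_mul_eq_one s heq).unit, 0, 0, by simp⟩
    | 0, M + 1 =>
      have hdvd : q ∣ r * s := ⟨p ^ 0 * q ^ M, by rw [heq]; ring⟩
      rcases hq.2.2 r s hdvd with ⟨r1, hr1⟩ | ⟨s1, hs1⟩
      · have key : r1 * s = p ^ 0 * q ^ M := by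
          apply mul_left_cancel₀ hq.ne_zero
          rw [show q * (r1 * s) = q * r1 * s by ring, ← hr1, heq]
          ring
        obtain ⟨U, i, j, hU⟩ := IH 0 M r1 s (by omega) key
        exact ⟨U, i, j + 1, by rw [hr1, hU]; ring⟩
      · have key : r * s1 = p ^ 0 * q ^ M := by
          apply mul_left_cancel₀ hq.ne_zero
          rw [show q * (r * s1) = r * (q * s1) by ring, ← hs1, heq]
          ring
        exact IH 0 M r s1 (by omega) key
    | N + 1, M =>
      have hdvd : p ∣ r * s := ⟨p ^ N * q ^ M, by rw [heq]; ring⟩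
      rcases hp.2.2 r s hdvd with ⟨r1, hr1⟩ | ⟨s1, hs1⟩
      · have key : r1 * s = p ^ N * q ^ M := by
          apply mul_left_cancel₀ hp.ne_zero
          rw [show p * (r1 * s) = p * r1 * s by ring, ← hr1, heq]
          ring
        obtain ⟨U, i, j, hU⟩ := IH N M r1 s (by omega) key
        exact ⟨U, i + 1, j, by rw [hr1, hU]; ring⟩
      · have key : r * s1 = p ^ N * q ^ M := by
          apply mul_left_cancel₀ hp.ne_zero
          rw [show p * (r * s1) = r * (p * s1) by ring, ← hs1, heq]
          ring
        exact IH N M r s1 (by omega) key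

section Key
variable {k : Type*} [Field k]

lemma phi_apply (f : MvPowerSeries (Fin 4) k) : phi f = phiFun f := rfl

lemma X0X2 : (MvPowerSeries.X 0 * MvPowerSeries.X 2 : MvPowerSeries (Fin 4) k)
    = MvPowerSeries.monomial (mk4 1 0 1 0) 1 := by
  rw [MvPowerSeries.X_def, MvPowerSeries.X_def, MvPowerSeries.monomial_mul_monomial, one_mul]
  have h : ((fun₀ | (0 : Fin 4) => 1) + fun₀ | (2 : Fin 4) => 1 : M4) = mk4 1 0 1 0 := by
    apply m4_ext <;> simp [Finsupp.single_apply]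
  rw [h]

lemma phi_X0 : phi (MvPowerSeries.X 0 : MvPowerSeries (Fin 4) k)
    = MvPowerSeries.X 0 * MvPowerSeries.X 2 := by
  rw [X0X2, MvPowerSeries.X_def, phi_apply, phiFun_monomial]
  have h : img (fun₀ | (0 : Fin 4) => 1) = mk4 1 0 1 0 := by
    apply m4_ext <;> simp [img, Finsupp.single_apply]
  rw [h]

lemma phi_q : phi ((MvPowerSeries.X 0 * MvPowerSeries.X 3
    - MvPowerSeries.X 1 * MvPowerSeries.X 2 : MvPowerSeries (Fin 4) k)) = 0 := by
  rw [map_sub, X0X3, X1X2, phi_apply, phi_apply, phiFun_monomial, phiFun_monomial]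
  have h : img m03 = img m12 := by
    apply m4_ext <;> simp [img, m03, m12]
  rw [h, sub_self]

lemma X0iX2j (i j : ℕ) : ((MvPowerSeries.X 0 : MvPowerSeries (Fin 4) k) ^ i)
    * (MvPowerSeries.X 2) ^ j = MvPowerSeries.monomial (mk4 i 0 j 0) 1 := by
  rw [MvPowerSeries.X_pow_eq, MvPowerSeries.X_pow_eq, MvPowerSeries.monomial_mul_monomial, one_mul]
  have h : ((fun₀ | (0 : Fin 4) => i) + fun₀ | (2 : Fin 4) => j : M4) = mk4 i 0 j 0 := by
    apply m4_ext <;> simp [Finsupp.single_apply]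
  rw [h]

lemma sig_zero : sig (0 : MvPowerSeries (Fin 4) k) = 0 := by
  funext e
  rw [sig]
  split_ifs <;> rfl

set_option maxHeartbeats 2000000 in
/-- Key structural lemma: in `R = S/(x₁x₄ - x₂x₃)`, any divisor of a power of `x₁`
is a unit times a power of `x₁`. -/
lemma key_lemma {I : Ideal (MvPowerSeries (Fin 4) k)}
    (hI : I = Ideal.span
      {MvPowerSeries.X 0 * MvPowerSeries.X 3 - MvPowerSeries.X 1 * MvPowerSeries.X 2})
    (r s : MvPowerSeries (Fin 4) k ⧸ I) (N : ℕ)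
    (h : r * s = (Ideal.Quotient.mk I (MvPowerSeries.X 0)) ^ N) :
    ∃ (u : (MvPowerSeries (Fin 4) k ⧸ I)ˣ) (i : ℕ),
      r = (u : MvPowerSeries (Fin 4) k ⧸ I) * (Ideal.Quotient.mk I (MvPowerSeries.X 0)) ^ i := by
  obtain ⟨rt, rfl⟩ := Ideal.Quotient.mk_surjective r
  obtain ⟨st, rfl⟩ := Ideal.Quotient.mk_surjective s
  rw [← map_mul, ← map_pow, Ideal.Quotient.eq, hI, Ideal.mem_span_singleton] at h
  obtain ⟨g, hg⟩ := h
  have hrtst : rt * st = MvPowerSeries.X 0 ^ N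
      + (MvPowerSeries.X 0 * MvPowerSeries.X 3 - MvPowerSeries.X 1 * MvPowerSeries.X 2) * g :=
    by rw [← hg]; ring
  have hphi : phi rt * phi st
      = ((MvPowerSeries.X 0 : MvPowerSeries (Fin 4) k) ^ N) * (MvPowerSeries.X 2) ^ N := by
    rw [← map_mul, hrtst, map_add, map_mul, phi_q, zero_mul, add_zero, map_pow, phi_X0, mul_pow]
  obtain ⟨U, i, j, hU⟩ := factor_aux (X_prime 0) (X_prime 2) (N + N) N N _ _ le_rfl hphi
  have hne : MvPowerSeries.constantCoeff (U : MvPowerSeries (Fin 4) k) ≠ 0 :=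
    (MvPowerSeries.isUnit_iff_constantCoeff.mp U.isUnit).ne_zero
  have hcoeff : MvPowerSeries.coeff (mk4 i 0 j 0) (phi rt)
      = MvPowerSeries.constantCoeff (U : MvPowerSeries (Fin 4) k) := by
    rw [hU, mul_assoc, X0iX2j, MvPowerSeries.coeff_mul_monomial, if_pos le_rfl, tsub_self,
      mul_one, MvPowerSeries.coeff_zero_eq_constantCoeff]
  have hij : i = j := by
    by_contra hij
    have hb : ¬ Bal (mk4 i 0 j 0) := by
      rw [Bal]; simp; omega
    have hz := phiFun_bal rt hb
    rw [phi_apply, coeffE, hz] at hcoeff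
    exact hne hcoeff.symm
  subst hij
  have hUbal : ∀ E, ¬ Bal E → (U : MvPowerSeries (Fin 4) k) E = 0 := by
    intro E hE
    have h1 : MvPowerSeries.coeff (E + mk4 i 0 i 0) (phi rt)
        = (U : MvPowerSeries (Fin 4) k) E := by
      rw [hU, mul_assoc, X0iX2j, MvPowerSeries.coeff_mul_monomial, if_pos le_add_self,
        add_tsub_cancel_right, mul_one]
      rfl
    have h2 : ¬ Bal (E + mk4 i 0 i 0) := by
      rw [Bal] at hE ⊢
      simp only [m4_add_apply, mk4_apply0, mk4_apply1, mk4_apply2, mk4_apply3]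
      omega
    rw [← h1, phi_apply, coeffE, phiFun_bal rt h2]
  have hconst : MvPowerSeries.constantCoeff (sig (U : MvPowerSeries (Fin 4) k)) ≠ 0 := by
    show sig (U : MvPowerSeries (Fin 4) k) 0 ≠ 0
    have h0 : sig (U : MvPowerSeries (Fin 4) k) 0 = (U : MvPowerSeries (Fin 4) k) 0 := by
      show (if (0 : M4) 1 = 0 ∨ (0 : M4) 2 = 0
          then (U : MvPowerSeries (Fin 4) k) (img 0) else 0) = _
      rw [if_pos (Or.inl (by simp)), img_zero]
    rw [h0]
    exact hne
  have hunit : IsUnit (sig (U : MvPowerSeries (Fin 4) k)) :=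
    MvPowerSeries.isUnit_iff_constantCoeff.mpr (isUnit_iff_ne_zero.mpr hconst)
  have hps : phiFun (sig (U : MvPowerSeries (Fin 4) k)) = (U : MvPowerSeries (Fin 4) k) :=
    phi_sig _ hUbal
  set x := rt - sig (U : MvPowerSeries (Fin 4) k) * (MvPowerSeries.X 0 : MvPowerSeries (Fin 4) k) ^ i
    with hx
  have hphix : phiFun x = 0 := by
    rw [← phi_apply, hx, map_sub, map_mul, map_pow, phi_X0, phi_apply (sig _), hps, hU, mul_pow]
    ring
  have hxI : x ∈ I := by
    have hred := reduction (k := k) x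
    rw [hphix, sig_zero] at hred
    rw [hI, Ideal.mem_span_singleton]
    exact ⟨-gg x, by linear_combination -hred⟩
  have hmk : Ideal.Quotient.mk I rt
      = Ideal.Quotient.mk I (sig (U : MvPowerSeries (Fin 4) k)
          * (MvPowerSeries.X 0 : MvPowerSeries (Fin 4) k) ^ i) := by
    rw [Ideal.Quotient.eq]
    exact hxI
  refine ⟨(hunit.map (Ideal.Quotient.mk I)).unit, i, ?_⟩
  rw [hmk, map_mul, map_pow, IsUnit.unit_spec]

end Key


/-- generic: if every divisor of a power of `a` is a unit times a power of `a`,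
then every unit of `R[1/a]` is a unit of `R` times an integer power of `a`. -/
lemma loc_units {R : Type*} [CommRing R] (a : R)
    (hkey : ∀ r s : R, ∀ N : ℕ, r * s = a ^ N → ∃ (u : Rˣ) (i : ℕ), r = (u : R) * a ^ i)
    (v : (Localization.Away a)ˣ) :
    ∃ (u : Rˣ) (w : (Localization.Away a)ˣ) (t : ℤ),
      (w : Localization.Away a) = algebraMap R (Localization.Away a) a ∧
      v = (Units.map (algebraMap R (Localization.Away a)).toMonoidHom u) * w ^ t := by
  classical
  have hw : IsUnit (algebraMap R (Localization.Away a) a) :=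
    IsLocalization.map_units (M := Submonoid.powers a) (Localization.Away a)
      ⟨a, Submonoid.mem_powers a⟩
  obtain ⟨⟨r, d1⟩, hvr⟩ := IsLocalization.surj (Submonoid.powers a) (v : Localization.Away a)
  obtain ⟨⟨s, d2⟩, hvs⟩ :=
    IsLocalization.surj (Submonoid.powers a) ((v⁻¹ : (Localization.Away a)ˣ) : Localization.Away a)
  obtain ⟨n, hn'⟩ := d1.2
  obtain ⟨m, hm'⟩ := d2.2
  have hn : a ^ n = (d1 : R) := hn'
  have hm : a ^ m = (d2 : R) := hm'
  simp only at hvr hvs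
  have hcomb : algebraMap R (Localization.Away a) ((d1 : R) * d2)
      = algebraMap R (Localization.Away a) (r * s) := by
    rw [map_mul, map_mul]
    calc algebraMap R (Localization.Away a) (d1 : R) * algebraMap R (Localization.Away a) (d2 : R)
        = ((v : Localization.Away a) * algebraMap R (Localization.Away a) (d1 : R))
          * (((v⁻¹ : (Localization.Away a)ˣ) : Localization.Away a)
              * algebraMap R (Localization.Away a) (d2 : R)) := by
          rw [show (v : Localization.Away a) * algebraMap R (Localization.Away a) (d1 : R)
              * (((v⁻¹ : (Localization.Away a)ˣ) : Localization.Away a)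
                * algebraMap R (Localization.Away a) (d2 : R))
              = ((v : Localization.Away a) * ((v⁻¹ : (Localization.Away a)ˣ) : Localization.Away a))
                * (algebraMap R (Localization.Away a) (d1 : R)
                    * algebraMap R (Localization.Away a) (d2 : R)) by ring,
            Units.mul_inv, one_mul]
      _ = _ := by rw [hvr, hvs]
  obtain ⟨c, hc⟩ :=
    (IsLocalization.eq_iff_exists (Submonoid.powers a) (Localization.Away a)).mp hcomb
  obtain ⟨c', hc''⟩ := c.2
  have hc' : a ^ c' = (c : R) := hc''
  have heq : r * (s * a ^ c') = a ^ (c' + n + m) := by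
    have h0 : a ^ c' * ((d1 : R) * d2) = a ^ c' * (r * s) := by rw [hc']; exact hc
    rw [← hn, ← hm] at h0
    rw [pow_add, pow_add]
    linear_combination -h0
  obtain ⟨u, i, hu⟩ := hkey r (s * a ^ c') (c' + n + m) heq
  refine ⟨u, hw.unit, (i : ℤ) - (n : ℤ), hw.unit_spec, ?_⟩
  have hunits : v * hw.unit ^ (n : ℤ)
      = (Units.map (algebraMap R (Localization.Away a)).toMonoidHom u) * hw.unit ^ (i : ℤ) := by
    apply Units.ext
    rw [zpow_natCast, zpow_natCast, Units.val_mul, Units.val_mul,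
      Units.val_pow_eq_pow_val, Units.val_pow_eq_pow_val, hw.unit_spec]
    have h1 : (v : Localization.Away a) * (algebraMap R (Localization.Away a) a) ^ n
        = algebraMap R (Localization.Away a) r := by
      rw [← map_pow, hn]; exact hvr
    have h2 : ((Units.map (algebraMap R (Localization.Away a)).toMonoidHom u : _ˣ)
        : Localization.Away a) = algebraMap R (Localization.Away a) (u : R) := rfl
    rw [h1, h2, ← map_pow, ← map_mul, hu]
  calc v = (Units.map (algebraMap R (Localization.Away a)).toMonoidHom u) * hw.unit ^ (i : ℤ)
        * (hw.unit ^ (n : ℤ))⁻¹ := eq_mul_inv_of_mul_eq hunits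
    _ = _ := by
      rw [mul_assoc, ← zpow_neg, ← zpow_add, ← sub_eq_add_neg]



/-- let `k` be a field and `R = k[[x₁,x₂,x₃,x₄]]/(x₁x₄ - x₂x₃)`.  Every unit
`v` of `R[1/x₁]` is of the form `u · x₁^t` with `u` (the image of) a unit of `R` and
`t ∈ ℤ`; here `x₁^t` is the `t`-th power of the unit `w` of `R[1/x₁]` whose underlying
element is the image of `x₁`.  (Variables `x₁,x₂,x₃,x₄` are `X 0, X 1, X 2, X 3`.) -/
theorem statement_18 (k : Type*) [Field k]
    (I : Ideal (MvPowerSeries (Fin 4) k))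
    (hI : I = Ideal.span
      {MvPowerSeries.X 0 * MvPowerSeries.X 3 - MvPowerSeries.X 1 * MvPowerSeries.X 2})
    (v : (Localization.Away (Ideal.Quotient.mk I (MvPowerSeries.X 0)))ˣ) :
    ∃ (u : (MvPowerSeries (Fin 4) k ⧸ I)ˣ)
      (w : (Localization.Away (Ideal.Quotient.mk I (MvPowerSeries.X 0)))ˣ) (t : ℤ),
      (w : Localization.Away (Ideal.Quotient.mk I (MvPowerSeries.X 0)))
          = algebraMap (MvPowerSeries (Fin 4) k ⧸ I)
              (Localization.Away (Ideal.Quotient.mk I (MvPowerSeries.X 0)))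
              (Ideal.Quotient.mk I (MvPowerSeries.X 0)) ∧
        v = (Units.map (algebraMap (MvPowerSeries (Fin 4) k ⧸ I)
              (Localization.Away (Ideal.Quotient.mk I (MvPowerSeries.X 0)))).toMonoidHom u)
            * w ^ t := by
  exact loc_units (Ideal.Quotient.mk I (MvPowerSeries.X 0))
    (fun r s N h => key_lemma hI r s N h) v
end

section
/- Let A be a commutative ring, let p be a positive integer, and let x₁, x₂, x₃, x₄ ∈ A with x₁ invertible and x₁x₄ = x₂x₃. Then for all z₁, z₂ ∈ A, the two equations z₁ = x₁z₁^p + x₂z₂^p and z₂ = x₃z₁^p + x₄z₂^p hold simultaneously if and only if x₁z₂ = x₃z₁ and z₁ = (x₁ + x₁^{−p}x₂x₃^p)·z₁^p. -/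
/-- in a commutative ring `A`, if `x₁` is invertible (with inverse the unit
`u⁻¹`) and `x₁x₄ = x₂x₃`, then for all `z₁ z₂ ∈ A` the system
`z₁ = x₁z₁^p + x₂z₂^p`, `z₂ = x₃z₁^p + x₄z₂^p` holds iff
`x₁z₂ = x₃z₁` and `z₁ = (x₁ + x₁^{-p}x₂x₃^p)·z₁^p`. -/
theorem statement_19 (A : Type*) [CommRing A] (p : ℕ) (hp : 0 < p)
    (x₁ x₂ x₃ x₄ : A) (u : Aˣ) (hu : (u : A) = x₁) (h : x₁ * x₄ = x₂ * x₃)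
    (z₁ z₂ : A) :
    (z₁ = x₁ * z₁ ^ p + x₂ * z₂ ^ p ∧ z₂ = x₃ * z₁ ^ p + x₄ * z₂ ^ p) ↔
      (x₁ * z₂ = x₃ * z₁ ∧ z₁ = (x₁ + ((u⁻¹ : Aˣ) : A) ^ p * x₂ * x₃ ^ p) * z₁ ^ p) := by
  set v : A := ((u⁻¹ : Aˣ) : A) with hv
  have hv1 : v * x₁ = 1 := by rw [← hu]; exact u.inv_mul
  constructor
  · rintro ⟨h1, h2⟩
    have hz : x₁ * z₂ = x₃ * z₁ := by
      linear_combination x₁ * h2 - x₃ * h1 + z₂ ^ p * h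
    have hz2 : z₂ = v * x₃ * z₁ := by linear_combination v * hz - z₂ * hv1
    have hzp : z₂ ^ p = v ^ p * x₃ ^ p * z₁ ^ p := by
      rw [hz2, mul_pow, mul_pow]
    exact ⟨hz, by linear_combination h1 + x₂ * hzp⟩
  · rintro ⟨hz, h1⟩
    have hz2 : z₂ = v * x₃ * z₁ := by linear_combination v * hz - z₂ * hv1
    have hzp : z₂ ^ p = v ^ p * x₃ ^ p * z₁ ^ p := by
      rw [hz2, mul_pow, mul_pow]
    refine ⟨by linear_combination h1 - x₂ * hzp, ?_⟩
    linear_combination hz2 + v * x₃ * h1 - x₄ * hzp +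
      (x₃ * z₁ ^ p + v ^ p * x₃ ^ p * x₄ * z₁ ^ p) * hv1 -
      v ^ (p + 1) * x₃ ^ p * z₁ ^ p * h
end
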